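/- arXiv:2104.05097 — 4 statements merged into one kernel-verified Lean document; each statement's English description precedes it below -/
import Mathlib

section
/- Let X be a normed vector space, and let A, B be nonempty closed subsets of X with A ∪ B covering a set 𝒳. Define ∂ = {x ∈ X : d(x, A) = d(x, B)} and f(x) = d(x, ∂) if d(x,B) ≥ d(x,A), and f(x) = -d(x, ∂) otherwise. Then f is 1-Lipschitz. -/
open Metric

lemma cross_aux {X : Type*} [NormedAddCommGroup X] [NormedSpace ℝ X]
    (A B bdry : Set X) (hbdry : bdry = {x | infDist x A = infDist x B})
    (x y : X) (hx : infDist x A ≤ infDist x B) (hy : infDist y B ≤ infDist y A) :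
    infDist x bdry + infDist y bdry ≤ dist x y := by
  set h : ℝ → ℝ := fun t =>
    infDist (AffineMap.lineMap x y t) A - infDist (AffineMap.lineMap x y t) B with hh
  have hcont : Continuous h :=
    ((continuous_infDist_pt A).comp AffineMap.lineMap_continuous).sub
      ((continuous_infDist_pt B).comp AffineMap.lineMap_continuous)
  have h0 : h 0 ≤ 0 := by simp only [hh, AffineMap.lineMap_apply_zero]; linarith
  have h1 : 0 ≤ h 1 := by simp only [hh, AffineMap.lineMap_apply_one]; linarith
  have := intermediate_value_Icc (by norm_num : (0:ℝ) ≤ 1) hcont.continuousOn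
  obtain ⟨t, ht, hht⟩ := this ⟨h0, h1⟩
  set z := AffineMap.lineMap x y t with hz
  have hzb : z ∈ bdry := by
    rw [hbdry]; simpa [hh, sub_eq_zero] using hht
  have hx' : infDist x bdry ≤ dist x z := infDist_le_dist_of_mem hzb
  have hy' : infDist y bdry ≤ dist y z := infDist_le_dist_of_mem hzb
  have hxz : dist x z = |t| * dist x y := by
    rw [dist_comm, hz, dist_lineMap_left, Real.norm_eq_abs]
  have hyz : dist y z = |1 - t| * dist x y := by
    rw [dist_comm, hz, dist_lineMap_right, Real.norm_eq_abs]
  have habs : |t| = t := abs_of_nonneg ht.1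
  have habs2 : |1 - t| = 1 - t := abs_of_nonneg (by linarith [ht.2])
  have : dist x z + dist y z = dist x y := by
    rw [hxz, hyz, habs, habs2]; ring
  linarith

/-- The signed distance function to the equidistant locus of two nonempty closed
sets `A` and `B` (whose union covers `𝒳`) is 1-Lipschitz. -/
theorem stmt_0 {X : Type*} [NormedAddCommGroup X] [NormedSpace ℝ X]
    (A B 𝒳 : Set X) (hA : A.Nonempty) (hB : B.Nonempty)
    (hAc : IsClosed A) (hBc : IsClosed B) (hcov : 𝒳 ⊆ A ∪ B)
    (bdry : Set X) (hbdry : bdry = {x | infDist x A = infDist x B})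
    (hbdryne : bdry.Nonempty) :
    LipschitzWith 1 (fun x : X =>
      if infDist x A ≤ infDist x B then infDist x bdry else -infDist x bdry) := by
  rw [lipschitzWith_iff_dist_le_mul]
  intro x y
  simp only [NNReal.coe_one, one_mul]
  have hxb : 0 ≤ infDist x bdry := infDist_nonneg
  have hyb : 0 ≤ infDist y bdry := infDist_nonneg
  have hgen : ∀ a b : X, |infDist a bdry - infDist b bdry| ≤ dist a b := fun a b => by
    rw [abs_sub_le_iff]
    constructor
    · linarith [infDist_le_infDist_add_dist (x := a) (y := b) (s := bdry)]
    · linarith [infDist_le_infDist_add_dist (x := b) (y := a) (s := bdry), dist_comm a b]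
  by_cases hx : infDist x A ≤ infDist x B <;> by_cases hy : infDist y A ≤ infDist y B <;>
      simp only [hx, hy, if_true, if_false, Real.dist_eq]
  · exact hgen x y
  · have := cross_aux A B bdry hbdry x y hx (le_of_lt (not_le.mp hy))
    rw [abs_of_nonneg (by linarith)]
    linarith
  · have := cross_aux A B bdry hbdry y x hy (le_of_lt (not_le.mp hx))
    rw [dist_comm] at this
    rw [abs_of_nonpos (by linarith)]
    linarith
  · rw [neg_sub_neg, abs_sub_comm]; exact hgen x y
end

section
/- Let 𝒳 ⊂ ℝⁿ be compact and nonempty, and let ℒ : ℝ × {-1,+1} → ℝ be a function continuous in its first argument, nonnegative, and such that ℒ(t, y) → ∞ as y·t → -∞. Let μ be a probability measure on 𝒳 × {-1,+1} giving positive mass to both labels. Then the infimum over all 1-Lipschitz functions f : 𝒳 → ℝ of E_{(x,y)∼μ}[ℒ(f(x), y)] is attained by some 1-Lipschitz function f*. -/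
open MeasureTheory Filter
open scoped BoundedContinuousFunction

open Classical in
/-- Extension by zero of a bounded continuous function on a subset. -/
noncomputable def extFn {n : ℕ} (𝒳 : Set (EuclideanSpace ℝ (Fin n)))
    (g : ↥𝒳 →ᵇ ℝ) (x : EuclideanSpace ℝ (Fin n)) : ℝ :=
  if h : x ∈ 𝒳 then g ⟨x, h⟩ else 0

theorem extFn_pos {n : ℕ} {𝒳 : Set (EuclideanSpace ℝ (Fin n))}
    (g : ↥𝒳 →ᵇ ℝ) {x : EuclideanSpace ℝ (Fin n)} (h : x ∈ 𝒳) :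
    extFn 𝒳 g x = g ⟨x, h⟩ := by
  simp only [extFn]
  exact dif_pos h

theorem extFn_neg {n : ℕ} {𝒳 : Set (EuclideanSpace ℝ (Fin n))}
    (g : ↥𝒳 →ᵇ ℝ) {x : EuclideanSpace ℝ (Fin n)} (h : x ∉ 𝒳) :
    extFn 𝒳 g x = 0 := by
  simp only [extFn]
  exact dif_neg h

/-- On a nonempty compact set `𝒳 ⊂ ℝⁿ`, for a loss `ℒ(t, y)` (labels encoded by
`Bool`: `true ↦ +1`, `false ↦ -1`) which is continuous and nonnegative in `t`
and blows up as `y·t → -∞`, and a probability measure `μ` on `𝒳 × {-1,+1}`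
charging both labels, the infimum of the expected loss over 1-Lipschitz
functions on `𝒳` is attained. -/
theorem stmt_4 {n : ℕ} (𝒳 : Set (EuclideanSpace ℝ (Fin n)))
    (hcpt : IsCompact 𝒳) (hne : 𝒳.Nonempty)
    (ℒ : ℝ → Bool → ℝ)
    (hcont : ∀ y, Continuous fun t => ℒ t y)
    (hnonneg : ∀ t y, 0 ≤ ℒ t y)
    (hblowpos : Tendsto (fun t => ℒ t true) atBot atTop)
    (hblowneg : Tendsto (fun t => ℒ t false) atTop atTop)
    (μ : Measure (EuclideanSpace ℝ (Fin n) × Bool)) [IsProbabilityMeasure μ]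
    (hsupp : μ {p | p.1 ∉ 𝒳} = 0)
    (hpos : 0 < μ {p | p.2 = true}) (hneg : 0 < μ {p | p.2 = false}) :
    ∃ fstar : EuclideanSpace ℝ (Fin n) → ℝ, LipschitzOnWith 1 fstar 𝒳 ∧
      ∀ f : EuclideanSpace ℝ (Fin n) → ℝ, LipschitzOnWith 1 f 𝒳 →
        ∫ p, ℒ (fstar p.1) p.2 ∂μ ≤ ∫ p, ℒ (f p.1) p.2 ∂μ := by
  classical
  have h𝒳closed : IsClosed 𝒳 := hcpt.isClosed
  have h𝒳meas : MeasurableSet 𝒳 := h𝒳closed.measurableSet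
  haveI : CompactSpace 𝒳 := isCompact_iff_compactSpace.1 hcpt
  haveI : Nonempty 𝒳 := hne.to_subtype
  -- measurability / integrability of the basic integrands
  have hSmeas : MeasurableSet {p : EuclideanSpace ℝ (Fin n) × Bool | p.1 ∈ 𝒳} :=
    h𝒳meas.preimage measurable_fst
  have hae : ∀ᵐ p ∂μ, p.1 ∈ 𝒳 := by
    rw [ae_iff]; exact hsupp
  have hrestrict : μ.restrict {p : EuclideanSpace ℝ (Fin n) × Bool | p.1 ∈ 𝒳} = μ :=
    Measure.restrict_eq_self_of_ae_mem hae
  have Lcont : Continuous fun q : ℝ × Bool => ℒ q.1 q.2 := by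
    have hrw : (fun q : ℝ × Bool => ℒ q.1 q.2)
        = fun q : ℝ × Bool => if q.2 = true then ℒ q.1 true else ℒ q.1 false := by
      funext q
      rcases q with ⟨t, b⟩
      cases b <;> simp
    rw [hrw]
    have hclopen : IsClopen {q : ℝ × Bool | q.2 = true} := by
      have : {q : ℝ × Bool | q.2 = true} = Prod.snd ⁻¹' {true} := by
        ext q; simp
      rw [this]
      exact (isClopen_discrete _).preimage continuous_snd
    apply Continuous.if ?_ ((hcont true).comp continuous_fst) ((hcont false).comp continuous_fst)
    intro a ha
    rw [hclopen.frontier_eq] at ha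
    exact absurd ha (Set.notMem_empty a)
  have hextCont : ∀ g : ↥𝒳 →ᵇ ℝ, ContinuousOn (extFn 𝒳 g) 𝒳 := by
    intro g
    rw [continuousOn_iff_continuous_restrict]
    have : 𝒳.restrict (extFn 𝒳 g) = ⇑g := by
      funext x
      exact extFn_pos g x.2
    change Continuous (𝒳.restrict (extFn 𝒳 g)); rw [this]; exact g.continuous
  have hFcont : ∀ g : ↥𝒳 →ᵇ ℝ,
      ContinuousOn (fun p : EuclideanSpace ℝ (Fin n) × Bool => ℒ (extFn 𝒳 g p.1) p.2)
        {p | p.1 ∈ 𝒳} := by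
    intro g
    exact Lcont.comp_continuousOn (ContinuousOn.prodMk
      ((hextCont g).comp continuous_fst.continuousOn fun p hp => hp)
      continuous_snd.continuousOn)
  have hInt : ∀ g : ↥𝒳 →ᵇ ℝ,
      Integrable (fun p : EuclideanSpace ℝ (Fin n) × Bool => ℒ (extFn 𝒳 g p.1) p.2) μ := by
    intro g
    have hasm : AEStronglyMeasurable
        (fun p : EuclideanSpace ℝ (Fin n) × Bool => ℒ (extFn 𝒳 g p.1) p.2) μ := by
      have := (hFcont g).aestronglyMeasurable (μ := μ) hSmeas
      rwa [hrestrict] at this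
    obtain ⟨C₁, hC₁⟩ := isCompact_Icc.exists_bound_of_continuousOn
      (f := fun t => ℒ t true) (s := Set.Icc (-‖g‖) ‖g‖) (hcont true).continuousOn
    obtain ⟨C₂, hC₂⟩ := isCompact_Icc.exists_bound_of_continuousOn
      (f := fun t => ℒ t false) (s := Set.Icc (-‖g‖) ‖g‖) (hcont false).continuousOn
    have hmem : ∀ x, extFn 𝒳 g x ∈ Set.Icc (-‖g‖) ‖g‖ := by
      intro x
      by_cases hx : x ∈ 𝒳
      · rw [extFn_pos g hx]
        have := g.norm_coe_le_norm ⟨x, hx⟩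
        rw [Real.norm_eq_abs] at this
        exact abs_le.1 this
      · rw [extFn_neg g hx]
        exact ⟨neg_nonpos.2 (norm_nonneg g), norm_nonneg g⟩
    refine ⟨hasm, HasFiniteIntegral.of_bounded (C := max C₁ C₂)
      (Filter.Eventually.of_forall fun p => ?_)⟩
    rcases hb : p.2 with _ | _
    · exact le_trans (hC₂ _ (hmem p.1)) (le_max_right _ _)
    · exact le_trans (hC₁ _ (hmem p.1)) (le_max_left _ _)
  -- a lower bound for the expected loss when the loss is uniformly large on one label
  have lower : ∀ (g : ↥𝒳 →ᵇ ℝ) (b : Bool) (c : ℝ), (∀ x : 𝒳, c ≤ ℒ (g x) b) →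
      c * (μ {p | p.2 = b}).toReal ≤ ∫ p, ℒ (extFn 𝒳 g p.1) p.2 ∂μ := by
    intro g b c hc
    have hSbmeas : MeasurableSet ({p : EuclideanSpace ℝ (Fin n) × Bool | p.2 = b}
        ∩ {p | p.1 ∈ 𝒳}) :=
      ((measurableSet_singleton b).preimage measurable_snd).inter hSmeas
    have hμSb : μ ({p : EuclideanSpace ℝ (Fin n) × Bool | p.2 = b} ∩ {p | p.1 ∈ 𝒳})
        = μ {p | p.2 = b} := by
      refine le_antisymm (measure_mono Set.inter_subset_left) ?_
      have h1 := measure_inter_add_diff (μ := μ)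
        {p : EuclideanSpace ℝ (Fin n) × Bool | p.2 = b} hSmeas
      have h2 : μ ({p : EuclideanSpace ℝ (Fin n) × Bool | p.2 = b} \ {p | p.1 ∈ 𝒳}) = 0 :=
        measure_mono_null (fun p hp => hp.2) hsupp
      rw [h2, add_zero] at h1
      exact h1.ge
    calc c * (μ {p | p.2 = b}).toReal
        = c * (μ ({p : EuclideanSpace ℝ (Fin n) × Bool | p.2 = b} ∩ {p | p.1 ∈ 𝒳})).toReal := by
          rw [hμSb]
      _ ≤ ∫ p in {p : EuclideanSpace ℝ (Fin n) × Bool | p.2 = b} ∩ {p | p.1 ∈ 𝒳},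
            ℒ (extFn 𝒳 g p.1) p.2 ∂μ := by
          refine setIntegral_ge_of_const_le_real hSbmeas (measure_ne_top μ _) ?_
            ((hInt g).integrableOn)
          rintro p ⟨hp2, hp1⟩
          rw [extFn_pos g hp1,
            show p.2 = b from hp2]
          exact hc _
      _ ≤ ∫ p, ℒ (extFn 𝒳 g p.1) p.2 ∂μ :=
          setIntegral_le_integral (hInt g) (Filter.Eventually.of_forall fun p => hnonneg _ _)
  -- constants
  have hmtrue : (0:ℝ) < (μ {p | p.2 = true}).toReal :=
    ENNReal.toReal_pos hpos.ne' (measure_ne_top μ _)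
  have hmfalse : (0:ℝ) < (μ {p | p.2 = false}).toReal :=
    ENNReal.toReal_pos hneg.ne' (measure_ne_top μ _)
  set c0 := ∫ p, ℒ 0 p.2 ∂μ with hc0def
  have hc0nonneg : 0 ≤ c0 := integral_nonneg fun p => hnonneg _ _
  obtain ⟨T₁, hT₁⟩ := eventually_atTop.1
    (hblowneg.eventually_ge_atTop ((c0 + 1) / (μ {p | p.2 = false}).toReal))
  obtain ⟨T₂, hT₂⟩ := eventually_atBot.1
    (hblowpos.eventually_ge_atTop ((c0 + 1) / (μ {p | p.2 = true}).toReal))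
  set D := Metric.diam 𝒳 with hDdef
  set M0 := max (max T₁ (-T₂)) 0 with hM0def
  set M := M0 + D with hMdef
  have hM0nonneg : (0:ℝ) ≤ M0 := le_max_right _ _
  have hDnonneg : (0:ℝ) ≤ D := Metric.diam_nonneg
  have hMnonneg : (0:ℝ) ≤ M := add_nonneg hM0nonneg hDnonneg
  have hT₁M0 : T₁ ≤ M0 := le_trans (le_max_left _ _) (le_max_left _ _)
  have hT₂M0 : -M0 ≤ T₂ := by
    have : -T₂ ≤ M0 := le_trans (le_max_right _ _) (le_max_left _ _)
    linarith
  -- the compact set of candidate functions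
  set K := {g : ↥𝒳 →ᵇ ℝ | ∀ x y : 𝒳, dist (g x) (g y) ≤ dist x y}
      ∩ {g : ↥𝒳 →ᵇ ℝ | ∀ x : 𝒳, g x ∈ Set.Icc (-M) M} with hKdef
  have hK1closed : IsClosed {g : ↥𝒳 →ᵇ ℝ | ∀ x y : 𝒳, dist (g x) (g y) ≤ dist x y} := by
    simp only [Set.setOf_forall]
    exact isClosed_iInter fun x => isClosed_iInter fun y =>
      isClosed_le (Continuous.dist (continuous_eval_const _)
        (continuous_eval_const _)) continuous_const
  have hK2closed : IsClosed {g : ↥𝒳 →ᵇ ℝ | ∀ x : 𝒳, g x ∈ Set.Icc (-M) M} := by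
    simp only [Set.setOf_forall]
    exact isClosed_iInter fun x =>
      isClosed_Icc.preimage (continuous_eval_const _)
  have hKclosed : IsClosed K := hK1closed.inter hK2closed
  have hKcpt : IsCompact K := by
    refine BoundedContinuousFunction.arzela_ascoli₂ (Set.Icc (-M) M) isCompact_Icc K hKclosed
      (fun g x hg => hg.2 x) ?_
    exact Metric.equicontinuous_of_continuity_modulus (fun t => t) tendsto_id _
      fun x y i => i.2.1 x y
  have h0K : (0 : ↥𝒳 →ᵇ ℝ) ∈ K := by
    constructor
    · intro x y
      simp [dist_nonneg]
    · intro x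
      simp only [BoundedContinuousFunction.coe_zero, Pi.zero_apply, Set.mem_Icc]
      exact ⟨neg_nonpos.2 hMnonneg, hMnonneg⟩
  -- values of extensions of members of K
  have hmemK : ∀ g ∈ K, ∀ x, extFn 𝒳 g x ∈ Set.Icc (-M) M := by
    intro g hg x
    by_cases hx : x ∈ 𝒳
    · rw [extFn_pos g hx]
      exact hg.2 ⟨x, hx⟩
    · rw [extFn_neg g hx]
      exact ⟨neg_nonpos.2 hMnonneg, hMnonneg⟩
  -- continuity of the expected loss on K
  have hΦcont : ContinuousOn (fun g : ↥𝒳 →ᵇ ℝ => ∫ p, ℒ (extFn 𝒳 g p.1) p.2 ∂μ) K := by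
    rw [Metric.continuousOn_iff]
    intro g hg ε hε
    obtain ⟨δ₁, hδ₁pos, hδ₁⟩ := Metric.uniformContinuousOn_iff.1
      (isCompact_Icc.uniformContinuousOn_of_continuous
        (s := Set.Icc (-M) M) (hcont true).continuousOn) (ε/2) (by linarith)
    obtain ⟨δ₂, hδ₂pos, hδ₂⟩ := Metric.uniformContinuousOn_iff.1
      (isCompact_Icc.uniformContinuousOn_of_continuous
        (s := Set.Icc (-M) M) (hcont false).continuousOn) (ε/2) (by linarith)
    refine ⟨min δ₁ δ₂, lt_min hδ₁pos hδ₂pos, fun h hh hdist => ?_⟩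
    have hptwise : ∀ p : EuclideanSpace ℝ (Fin n) × Bool,
        dist (ℒ (extFn 𝒳 h p.1) p.2) (ℒ (extFn 𝒳 g p.1) p.2) < ε/2 := by
      intro p
      have hd : dist (extFn 𝒳 h p.1) (extFn 𝒳 g p.1) < min δ₁ δ₂ := by
        by_cases hp : p.1 ∈ 𝒳
        · rw [extFn_pos h hp,
            extFn_pos g hp]
          exact lt_of_le_of_lt (BoundedContinuousFunction.dist_coe_le_dist _) hdist
        · rw [extFn_neg h hp,
            extFn_neg g hp]
          simpa using lt_min hδ₁pos hδ₂pos
      rcases hb : p.2 with _ | _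
      · exact hδ₂ _ (hmemK h hh p.1) _ (hmemK g hg p.1)
          (lt_of_lt_of_le hd (min_le_right _ _))
      · exact hδ₁ _ (hmemK h hh p.1) _ (hmemK g hg p.1)
          (lt_of_lt_of_le hd (min_le_left _ _))
    have hsub : ∫ p, ℒ (extFn 𝒳 h p.1) p.2 ∂μ - ∫ p, ℒ (extFn 𝒳 g p.1) p.2 ∂μ
        = ∫ p, (ℒ (extFn 𝒳 h p.1) p.2 - ℒ (extFn 𝒳 g p.1) p.2) ∂μ :=
      (integral_sub (hInt h) (hInt g)).symm
    rw [Real.dist_eq, ← Real.norm_eq_abs, hsub]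
    calc ‖∫ p, (ℒ (extFn 𝒳 h p.1) p.2 - ℒ (extFn 𝒳 g p.1) p.2) ∂μ‖
        ≤ (ε/2) * (μ Set.univ).toReal := by
          refine norm_integral_le_of_norm_le_const
            (Filter.Eventually.of_forall fun p => ?_)
          have := (hptwise p).le
          rwa [Real.dist_eq, ← Real.norm_eq_abs] at this
      _ = ε/2 := by simp
      _ < ε := by linarith
  -- minimize
  obtain ⟨gm, hgmK, hgmmin⟩ := hKcpt.exists_isMinOn ⟨0, h0K⟩ hΦcont
  have hΦ0 : ∫ p, ℒ (extFn 𝒳 (0 : ↥𝒳 →ᵇ ℝ) p.1) p.2 ∂μ = c0 := by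
    have : (fun p : EuclideanSpace ℝ (Fin n) × Bool => ℒ (extFn 𝒳 (0 : ↥𝒳 →ᵇ ℝ) p.1) p.2)
        = fun p => ℒ 0 p.2 := by
      funext p
      congr 1
      by_cases hp : p.1 ∈ 𝒳 <;> simp [extFn, hp]
    rw [this, hc0def]
  have hgm_le_c0 : ∫ p, ℒ (extFn 𝒳 gm p.1) p.2 ∂μ ≤ c0 := by
    have := isMinOn_iff.1 hgmmin 0 h0K
    rwa [hΦ0] at this
  refine ⟨extFn 𝒳 gm, ?_, ?_⟩
  · -- Lipschitz
    rw [lipschitzOnWith_iff_dist_le_mul]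
    intro x hx y hy
    rw [extFn_pos gm hx,
      extFn_pos gm hy]
    have := hgmK.1 ⟨x, hx⟩ ⟨y, hy⟩
    simpa [Subtype.dist_eq] using this
  · intro f hf
    have hfrestrict : LipschitzWith 1 (𝒳.restrict f) := lipschitzOnWith_iff_restrict.1 hf
    set gf : ↥𝒳 →ᵇ ℝ :=
      BoundedContinuousFunction.mkOfCompact ⟨𝒳.restrict f, hfrestrict.continuous⟩ with hgfdef
    have hgfapply : ∀ x : 𝒳, gf x = f x := fun x => rfl
    have hgflip : ∀ x y : 𝒳, dist (gf x) (gf y) ≤ dist x y := by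
      intro x y
      have h := hfrestrict.dist_le_mul x y
      simp only [NNReal.coe_one, one_mul] at h
      exact h
    have heq : ∫ p, ℒ (f p.1) p.2 ∂μ = ∫ p, ℒ (extFn 𝒳 gf p.1) p.2 ∂μ := by
      apply integral_congr_ae
      filter_upwards [hae] with p hp
      congr 1
      rw [extFn_pos gf hp, hgfapply]
    rw [heq]
    by_cases hbig : ∀ x : 𝒳, |gf x| ≤ M
    · have hgfK : gf ∈ K := ⟨hgflip, fun x => abs_le.1 (hbig x)⟩
      exact isMinOn_iff.1 hgmmin gf hgfK
    · push_neg at hbig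
      obtain ⟨x, hx⟩ := hbig
      have hDbound : ∀ x' : 𝒳, dist (gf x) (gf x') ≤ D := by
        intro x'
        exact le_trans (hgflip x x')
          (by rw [Subtype.dist_eq]; exact Metric.dist_le_diam_of_mem hcpt.isBounded x.2 x'.2)
      have key : c0 + 1 ≤ ∫ p, ℒ (extFn 𝒳 gf p.1) p.2 ∂μ := by
        rcases lt_abs.1 hx with hx' | hx'
        · -- gf x > M, false label blows up
          have hall : ∀ x' : 𝒳, T₁ ≤ gf x' := by
            intro x'
            have h1 : gf x - gf x' ≤ D :=
              le_trans (le_abs_self _) (by rw [← Real.dist_eq]; exact hDbound x')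
            have : M = M0 + D := hMdef
            linarith
          have := lower gf false ((c0 + 1) / (μ {p | p.2 = false}).toReal)
            (fun x' => hT₁ _ (hall x'))
          rwa [div_mul_cancel₀ _ hmfalse.ne'] at this
        · -- gf x < -M, true label blows up
          have hall : ∀ x' : 𝒳, gf x' ≤ T₂ := by
            intro x'
            have h1 : gf x' - gf x ≤ D := by
              have := hDbound x'
              rw [dist_comm, Real.dist_eq] at this
              exact le_trans (le_abs_self _) this
            have : M = M0 + D := hMdef
            linarith
          have := lower gf true ((c0 + 1) / (μ {p | p.2 = true}).toReal)
            (fun x' => hT₂ _ (hall x'))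
          rwa [div_mul_cancel₀ _ hmtrue.ne'] at this
      linarith
end

section
/- For every ε with 0 < ε ≤ 1/2, there exist finitely supported probability measures P and Q on ℝ with disjoint supports such that every 1-Lipschitz function f : ℝ → ℝ maximizing E_{x∼P}[f(x)] - E_{z∼Q}[f(z)] (the Kantorovich–Rubinstein objective) yields a classifier sign∘f whose classification error (1/2)·P(f ≤ 0) + (1/2)·Q(f ≥ 0) is at least 1/2 - ε. -/
open MeasureTheory Finset
open scoped ENNReal

private lemma wgan_decay {n : ℕ} {u : ℕ → ℝ} (h : ∀ i, i + 1 < n → u (i+1) ≤ u i - 2) :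
    ∀ i j, i ≤ j → j < n → u j ≤ u i - 2 * ((j - i : ℕ) : ℝ) := by
  intro i j hij hj
  induction j with
  | zero => interval_cases i <;> simp
  | succ k ih =>
    rcases Nat.eq_or_lt_of_le hij with rfl | hlt
    · simp
    · have hik : i ≤ k := Nat.lt_succ_iff.mp hlt
      have h1 := ih hik (Nat.lt_of_succ_lt hj)
      have h2 := h k hj
      have h3 : ((k + 1 - i : ℕ) : ℝ) = ((k - i : ℕ) : ℝ) + 1 := by
        have : (k + 1 - i : ℕ) = (k - i) + 1 := by omega
        rw [this]; push_cast; ring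
      rw [h3]; linarith

private lemma wgan_count (n : ℕ) (u : ℕ → ℝ)
    (hstep : ∀ i, i + 1 < n → u (i+1) ≤ u i - 2) :
    (n : ℝ) - 2 ≤ ((range n).filter (fun i => u i ≤ 0)).card
      + ((range n).filter (fun i => 3 ≤ u i)).card := by
  classical
  set A := (range n).filter (fun i => u i ≤ 0) with hA
  set B := (range n).filter (fun i => 3 ≤ u i) with hB
  set M := (range n).filter (fun i => 0 < u i ∧ u i < 3) with hM
  have hsub : range n ⊆ A ∪ B ∪ M := by
    intro i hi
    simp only [hA, hB, hM, mem_union, mem_filter]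
    rcases le_or_gt (u i) 0 with h | h
    · exact Or.inl (Or.inl ⟨hi, h⟩)
    · rcases le_or_gt 3 (u i) with h' | h'
      · exact Or.inl (Or.inr ⟨hi, h'⟩)
      · exact Or.inr ⟨hi, h, h'⟩
  have hMcard : M.card ≤ 2 := by
    by_contra hc
    push_neg at hc
    have hne : M.Nonempty := Finset.card_pos.mp (by omega)
    have hminM := Finset.min'_mem M hne
    have hmaxM := Finset.max'_mem M hne
    set a := M.min' hne
    set b := M.max' hne
    have hsubI : M ⊆ Finset.Icc a b := by
      intro x hx
      exact Finset.mem_Icc.mpr ⟨Finset.min'_le M x hx, Finset.le_max' M x hx⟩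
    have hcard := Finset.card_le_card hsubI
    rw [Nat.card_Icc] at hcard
    have hab : a + 2 ≤ b := by omega
    have ha : 0 < u a ∧ u a < 3 := (Finset.mem_filter.mp hminM).2
    have hb : 0 < u b ∧ u b < 3 := (Finset.mem_filter.mp hmaxM).2
    have hbn : b < n := Finset.mem_range.mp (Finset.mem_filter.mp hmaxM).1
    have := wgan_decay hstep a b (by omega) hbn
    have h4 : (4:ℝ) ≤ 2 * ((b - a : ℕ) : ℝ) := by
      have : (2:ℝ) ≤ ((b - a : ℕ) : ℝ) := by exact_mod_cast Nat.le_sub_of_add_le (by omega)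
      linarith
    linarith [ha.2, hb.1]
  have hcards : n ≤ A.card + B.card + M.card := by
    calc n = (range n).card := (Finset.card_range n).symm
    _ ≤ (A ∪ B ∪ M).card := Finset.card_le_card hsub
    _ ≤ (A ∪ B).card + M.card := Finset.card_union_le _ _
    _ ≤ A.card + B.card + M.card := by linarith [Finset.card_union_le A B]
  have : (n : ℝ) ≤ A.card + B.card + 2 := by
    have : n ≤ A.card + B.card + 2 := by omega
    exact_mod_cast this
  linarith

private lemma wgan_meas_apply (n : ℕ) (c : ℕ → ℝ) (s : Set ℝ) :
    ((((n : ℝ≥0∞))⁻¹ • ∑ i ∈ range n, Measure.dirac (c i)) s)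
      = (n : ℝ≥0∞)⁻¹ * ∑ i ∈ range n, s.indicator (1 : ℝ → ℝ≥0∞) (c i) := by
  rw [Measure.smul_apply, Measure.finset_sum_apply]
  simp [Measure.dirac_apply, smul_eq_mul]

private lemma wgan_integral (n : ℕ) (c : ℕ → ℝ) (f : ℝ → ℝ) :
    ∫ x, f x ∂((((n : ℝ≥0∞))⁻¹ • ∑ i ∈ range n, Measure.dirac (c i)))
      = (n : ℝ)⁻¹ * ∑ i ∈ range n, f (c i) := by
  rw [integral_smul_measure,
    integral_finset_sum_measure (fun i _ => (integrable_const (f (c i))).congr (ae_eq_dirac f).symm)]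
  simp [integral_dirac, smul_eq_mul]

private lemma wgan_isprob (n : ℕ) (hn : n ≠ 0) (c : ℕ → ℝ) :
    IsProbabilityMeasure ((((n : ℝ≥0∞))⁻¹ • ∑ i ∈ range n, Measure.dirac (c i))) := by
  constructor
  rw [wgan_meas_apply]
  simp only [Set.indicator_univ, Pi.one_apply, Finset.sum_const, card_range, nsmul_eq_mul, mul_one]
  exact ENNReal.inv_mul_cancel (Nat.cast_ne_zero.mpr hn) (ENNReal.natCast_ne_top n)


/-- For every `0 < ε ≤ 1/2` there are finitely supported probability measures
`P`, `Q` on `ℝ` with disjoint supports such that every 1-Lipschitz maximizer of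
the Kantorovich–Rubinstein objective `E_P f - E_Q f` has classification error
at least `1/2 - ε`. -/
theorem stmt_6 (ε : ℝ) (hε0 : 0 < ε) (hε : ε ≤ 1/2) :
    ∃ P Q : Measure ℝ, IsProbabilityMeasure P ∧ IsProbabilityMeasure Q ∧
      (∃ S T : Finset ℝ, Disjoint S T ∧ P (↑S)ᶜ = 0 ∧ Q (↑T)ᶜ = 0) ∧
      ∀ f : ℝ → ℝ, LipschitzWith 1 f →
        (∀ g : ℝ → ℝ, LipschitzWith 1 g →
          ∫ x, g x ∂P - ∫ x, g x ∂Q ≤ ∫ x, f x ∂P - ∫ x, f x ∂Q) →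
        1/2 - ε ≤
          (1/2) * (P {x | f x ≤ 0}).toReal + (1/2) * (Q {x | 0 ≤ f x}).toReal := by
  set n : ℕ := ⌈1/ε⌉₊ with hn_def
  have hn1 : 1/ε ≤ (n : ℝ) := Nat.le_ceil _
  have h2ε : (2:ℝ) ≤ 1/ε := by
    rw [le_div_iff₀ hε0]; linarith
  have hn2 : (2:ℝ) ≤ (n:ℝ) := le_trans h2ε hn1
  have hn0 : n ≠ 0 := by
    intro h; rw [h] at hn2; norm_num at hn2
  have hnpos : (0:ℝ) < n := by linarith
  set c : ℕ → ℝ := fun i => 4 * i with hc_def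
  set d : ℕ → ℝ := fun i => 4 * i + 3 with hd_def
  set P : Measure ℝ := ((n : ℝ≥0∞))⁻¹ • ∑ i ∈ range n, Measure.dirac (c i) with hP_def
  set Q : Measure ℝ := ((n : ℝ≥0∞))⁻¹ • ∑ i ∈ range n, Measure.dirac (d i) with hQ_def
  refine ⟨P, Q, wgan_isprob n hn0 c, wgan_isprob n hn0 d, ?_, ?_⟩
  · refine ⟨(range n).image c, (range n).image d, ?_, ?_, ?_⟩
    · rw [Finset.disjoint_left]
      rintro a ha hb
      obtain ⟨i, -, hi⟩ := Finset.mem_image.mp ha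
      obtain ⟨j, -, hj⟩ := Finset.mem_image.mp hb
      rw [← hi] at hj
      simp only [hc_def, hd_def] at hj
      have : (4 * j + 3 : ℕ) = 4 * i := by exact_mod_cast hj
      omega
    · rw [hP_def, wgan_meas_apply]
      rw [Finset.sum_eq_zero (fun i hi => Set.indicator_of_notMem
        (by simp; exact ⟨i, Finset.mem_range.mp hi, rfl⟩) _), mul_zero]
    · rw [hQ_def, wgan_meas_apply]
      rw [Finset.sum_eq_zero (fun i hi => Set.indicator_of_notMem
        (by simp; exact ⟨i, Finset.mem_range.mp hi, rfl⟩) _), mul_zero]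
  · intro f hf hopt
    -- optimality against g = -x
    have hneg : LipschitzWith 1 (fun x : ℝ => -x) :=
      LipschitzWith.of_dist_le_mul (fun x y => by
        rw [NNReal.coe_one, one_mul, Real.dist_eq, Real.dist_eq,
          show -x - -y = -(x - y) by ring, abs_neg])
    have hg := hopt _ hneg
    rw [hP_def, hQ_def, wgan_integral, wgan_integral, wgan_integral, wgan_integral] at hg
    have hsum3 : (n:ℝ)⁻¹ * ∑ i ∈ range n, (-(c i)) - (n:ℝ)⁻¹ * ∑ i ∈ range n, (-(d i)) = 3 := by
      rw [← mul_sub, ← Finset.sum_sub_distrib]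
      have : ∀ i ∈ range n, -(c i) - -(d i) = 3 := by
        intro i _; simp [hc_def, hd_def]
      rw [Finset.sum_congr rfl this]
      simp [Finset.sum_const, card_range]
      field_simp
    rw [hsum3] at hg
    -- each pair contributes exactly 3
    have hle : ∀ i, f (c i) - f (d i) ≤ 3 := by
      intro i
      have := hf.dist_le_mul (c i) (d i)
      rw [Real.dist_eq, Real.dist_eq] at this
      have hcd : |c i - d i| = 3 := by
        have h3 : c i - d i = -3 := by simp only [hc_def, hd_def]; ring
        rw [h3, abs_neg]; norm_num
      calc f (c i) - f (d i) ≤ |f (c i) - f (d i)| := le_abs_self _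
        _ ≤ 1 * |c i - d i| := this
        _ = 3 := by rw [hcd]; ring
    have hsumf : (3:ℝ) * n ≤ ∑ i ∈ range n, (f (c i) - f (d i)) := by
      have h1 : (3:ℝ) ≤ (n:ℝ)⁻¹ * ∑ i ∈ range n, f (c i) - (n:ℝ)⁻¹ * ∑ i ∈ range n, f (d i) := hg
      rw [← mul_sub, ← Finset.sum_sub_distrib] at h1
      rw [← mul_le_mul_iff_right₀ (show (0:ℝ) < (n:ℝ)⁻¹ by positivity)]
      calc (n:ℝ)⁻¹ * (3 * n) = 3 := by field_simp
        _ ≤ _ := h1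
    have hterm : ∀ i ∈ range n, f (c i) - f (d i) = 3 := by
      intro i hi
      by_contra hne
      have hlt : f (c i) - f (d i) < 3 := lt_of_le_of_ne (hle i) hne
      have hstrict : ∑ j ∈ range n, (f (c j) - f (d j)) < ∑ j ∈ range n, (3:ℝ) :=
        Finset.sum_lt_sum (fun j _ => hle j) ⟨i, hi, hlt⟩
      rw [Finset.sum_const, card_range, nsmul_eq_mul] at hstrict
      linarith
    -- decay of u i = f (c i)
    set u : ℕ → ℝ := fun i => f (c i) with hu_def
    have hstep : ∀ i, i + 1 < n → u (i+1) ≤ u i - 2 := by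
      intro i hi
      have hdi : f (d i) = u i - 3 := by
        have := hterm i (Finset.mem_range.mpr (by omega))
        simp only [hu_def]; linarith
      have hdist := hf.dist_le_mul (c (i+1)) (d i)
      rw [Real.dist_eq, Real.dist_eq] at hdist
      have hcd : |c (i+1) - d i| = 1 := by
        simp only [hc_def, hd_def]; push_cast; ring_nf; simp
      rw [hcd, mul_one] at hdist
      have h1 : u (i+1) - f (d i) ≤ 1 := le_trans (le_abs_self _) hdist
      linarith
    have hcount := wgan_count n u hstep
    -- measures of the error sets
    have hPset : (P {x | f x ≤ 0}).toReal
        = (((range n).filter (fun i => u i ≤ 0)).card : ℝ) / n := by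
      rw [hP_def, wgan_meas_apply]
      have : ∀ i ∈ range n, ({x : ℝ | f x ≤ 0}).indicator (1 : ℝ → ℝ≥0∞) (c i)
          = (if u i ≤ 0 then (1:ℝ≥0∞) else 0) := by
        intro i _; simp [Set.indicator_apply, hu_def, Set.mem_setOf_eq]
      rw [Finset.sum_congr rfl this, Finset.sum_boole]
      rw [ENNReal.toReal_mul, ENNReal.toReal_inv]
      simp [div_eq_inv_mul]
    have hQset : (Q {x | 0 ≤ f x}).toReal
        = (((range n).filter (fun i => 3 ≤ u i)).card : ℝ) / n := by
      rw [hQ_def, wgan_meas_apply]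
      have : ∀ i ∈ range n, ({x : ℝ | 0 ≤ f x}).indicator (1 : ℝ → ℝ≥0∞) (d i)
          = (if 3 ≤ u i then (1:ℝ≥0∞) else 0) := by
        intro i hi
        have hdi : f (d i) = u i - 3 := by
          have := hterm i hi
          simp only [hu_def]; linarith
        simp [Set.indicator_apply, Set.mem_setOf_eq, hdi, sub_nonneg]
      rw [Finset.sum_congr rfl this, Finset.sum_boole]
      rw [ENNReal.toReal_mul, ENNReal.toReal_inv]
      simp [div_eq_inv_mul]
    rw [hPset, hQset]
    set a : ℝ := (((range n).filter (fun i => u i ≤ 0)).card : ℝ)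
    set b : ℝ := (((range n).filter (fun i => 3 ≤ u i)).card : ℝ)
    have he : 1/2 * (a/n) + 1/2 * (b/n) = (a+b)/(2*n) := by field_simp; try ring
    rw [he, le_div_iff₀ (by positivity)]
    have h1 : 1 ≤ ε * n := by
      rw [div_le_iff₀ hε0] at hn1; linarith
    nlinarith [hcount]
end

section
/- Let P = (1/n)·Σ_{i=1}^n δ_{4(i-1)} and Q = (1/n)·Σ_{i=1}^n δ_{4i-1} be measures on ℝ. Then any 1-Lipschitz function f : ℝ → ℝ achieving E_{x∼P}[f(x)] - E_{z∼Q}[f(z)] = -W₁(P,Q) = -3 satisfies f(4i-1) = f(4(i-1)) + 3 for all 1 ≤ i ≤ n, and consequently f is strictly increasing on supp P and on supp Q. -/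
open MeasureTheory
open scoped ENNReal

/-- The Wasserstein-1 distance: infimum over couplings of the expected
distance. -/
noncomputable def W1 {X : Type*} [MeasurableSpace X] [PseudoMetricSpace X]
    (P Q : Measure X) : ℝ :=
  sInf {r | ∃ π : Measure (X × X),
    π.map Prod.fst = P ∧ π.map Prod.snd = Q ∧ r = ∫ p, dist p.1 p.2 ∂π}

lemma integrable_dirac'' {α : Type*} [MeasurableSpace α] [MeasurableSingletonClass α]
    (f : α → ℝ) (a : α) : Integrable f (Measure.dirac a) :=
  (integrable_const (f a)).congr (ae_eq_dirac f).symm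

lemma integral_smul_sum_dirac {α : Type*} [MeasurableSpace α] [MeasurableSingletonClass α]
    (n : ℕ) (a : ℕ → α) (g : α → ℝ) :
    ∫ x, g x ∂((n : ℝ≥0∞)⁻¹ • ∑ i ∈ Finset.range n, Measure.dirac (a i))
      = (n : ℝ)⁻¹ * ∑ i ∈ Finset.range n, g (a i) := by
  rw [integral_smul_measure, integral_finset_sum_measure (fun i _ => integrable_dirac'' g (a i))]
  simp [ENNReal.toReal_inv]

lemma map_finset_sum' {α β ι : Type*} [MeasurableSpace α] [MeasurableSpace β]
    {f : α → β} (hf : Measurable f) (s : Finset ι) (μ : ι → Measure α) :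
    (∑ i ∈ s, μ i).map f = ∑ i ∈ s, (μ i).map f := by
  classical
  induction s using Finset.induction with
  | empty => simp
  | insert _ _ h ih => rw [Finset.sum_insert h, Finset.sum_insert h, Measure.map_add _ _ hf, ih]

lemma ae_mem_of_marginal (n : ℕ) (a : ℕ → ℝ) (π : Measure (ℝ × ℝ)) (pr : ℝ × ℝ → ℝ)
    (hpr : Measurable pr)
    (hπ : π.map pr = (n : ℝ≥0∞)⁻¹ • ∑ i ∈ Finset.range n, Measure.dirac (a i)) :
    ∀ᵐ p ∂π, ∃ i < n, pr p = a i := by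
  set S : Set ℝ := ↑((Finset.range n).image fun i : ℕ => a i) with hSdef
  have hS : MeasurableSet S := Finset.measurableSet _
  have hPS : ((n : ℝ≥0∞)⁻¹ • ∑ i ∈ Finset.range n, Measure.dirac (a i)) Sᶜ = 0 := by
    rw [Measure.smul_apply, Measure.finset_sum_apply]
    have h0 : ∀ i ∈ Finset.range n, Measure.dirac (a i) Sᶜ = 0 := by
      intro i hi
      rw [Measure.dirac_apply' _ hS.compl]
      have hmem : a i ∈ S := by
        simp only [hSdef, Finset.coe_image, Set.mem_image, Finset.mem_coe]
        exact ⟨i, hi, rfl⟩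
      simp [Set.indicator_apply, hmem]
    rw [Finset.sum_eq_zero h0, smul_zero]
  have hae : ∀ᵐ p ∂π, pr p ∈ S := by
    rw [ae_iff]
    have heq : {p : ℝ × ℝ | ¬ pr p ∈ S} = pr ⁻¹' Sᶜ := rfl
    rw [heq, ← Measure.map_apply hpr hS.compl, hπ, hPS]
  filter_upwards [hae] with p hp
  simp only [hSdef, Finset.coe_image, Set.mem_image, Finset.mem_coe, Finset.mem_range] at hp
  obtain ⟨i, hi, heq⟩ := hp
  exact ⟨i, hi, heq.symm⟩

/-- For `P = (1/n)·Σ_{i<n} δ_{4i}` and `Q = (1/n)·Σ_{i<n} δ_{4i+3}` on `ℝ`,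
`W₁(P,Q) = 3`, and any 1-Lipschitz `f` with `E_P f - E_Q f = -3` satisfies
`f(4i+3) = f(4i) + 3` for all `i < n`, hence is strictly increasing on the
atoms of `P` and on the atoms of `Q`. -/
theorem stmt_7 (n : ℕ) (hn : 0 < n) (P Q : Measure ℝ)
    (hP : P = (n : ℝ≥0∞)⁻¹ • ∑ i ∈ Finset.range n, Measure.dirac (4 * (i : ℝ)))
    (hQ : Q = (n : ℝ≥0∞)⁻¹ • ∑ i ∈ Finset.range n, Measure.dirac (4 * (i : ℝ) + 3)) :
    W1 P Q = 3 ∧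
    ∀ f : ℝ → ℝ, LipschitzWith 1 f →
      (∫ x, f x ∂P - ∫ x, f x ∂Q = -3) →
      (∀ i < n, f (4 * (i : ℝ) + 3) = f (4 * (i : ℝ)) + 3) ∧
      (∀ i < n, ∀ j < n, i < j → f (4 * (i : ℝ)) < f (4 * (j : ℝ))) ∧
      (∀ i < n, ∀ j < n, i < j → f (4 * (i : ℝ) + 3) < f (4 * (j : ℝ) + 3)) := by
  have hn0 : (n : ℝ) ≠ 0 := Nat.cast_ne_zero.mpr hn.ne'
  have hPint : ∀ g : ℝ → ℝ,
      ∫ x, g x ∂P = (n : ℝ)⁻¹ * ∑ i ∈ Finset.range n, g (4 * (i : ℝ)) := fun g => by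
    rw [hP]; exact integral_smul_sum_dirac n _ g
  have hQint : ∀ g : ℝ → ℝ,
      ∫ x, g x ∂Q = (n : ℝ)⁻¹ * ∑ i ∈ Finset.range n, g (4 * (i : ℝ) + 3) := fun g => by
    rw [hQ]; exact integral_smul_sum_dirac n _ g
  -- lower bound for every coupling
  have key : ∀ r ∈ {r : ℝ | ∃ π : Measure (ℝ × ℝ),
      π.map Prod.fst = P ∧ π.map Prod.snd = Q ∧ r = ∫ p, dist p.1 p.2 ∂π}, 3 ≤ r := by
    rintro r ⟨π, hπ1, hπ2, rfl⟩
    haveI : IsFiniteMeasure π := by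
      constructor
      have huniv : π Set.univ = P Set.univ := by
        rw [← hπ1, Measure.map_apply measurable_fst MeasurableSet.univ]; rfl
      rw [huniv, hP, Measure.smul_apply, Measure.finset_sum_apply]
      simp only [Measure.dirac_apply_of_mem (Set.mem_univ _), Finset.sum_const,
        Finset.card_range, smul_eq_mul, nsmul_eq_mul, mul_one]
      exact lt_of_le_of_lt (le_of_eq (ENNReal.inv_mul_cancel (by simpa using hn.ne')
        (ENNReal.natCast_ne_top n))) ENNReal.one_lt_top
    have hae1 := ae_mem_of_marginal n (fun i => 4 * (i : ℝ)) π Prod.fst measurable_fst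
      (by rw [hπ1, hP])
    have hae2 := ae_mem_of_marginal n (fun i => 4 * (i : ℝ) + 3) π Prod.snd measurable_snd
      (by rw [hπ2, hQ])
    have hb1 : ∀ᵐ p ∂π, |p.1| ≤ 4 * (n : ℝ) := by
      filter_upwards [hae1] with p hp
      obtain ⟨i, hi, heq⟩ := hp
      rw [heq, abs_of_nonneg (by positivity)]
      have : (i : ℝ) ≤ n := Nat.cast_le.mpr hi.le
      nlinarith
    have hb2 : ∀ᵐ p ∂π, |p.2| ≤ 4 * (n : ℝ) + 3 := by
      filter_upwards [hae2] with p hp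
      obtain ⟨i, hi, heq⟩ := hp
      rw [heq, abs_of_nonneg (by positivity)]
      have : (i : ℝ) ≤ n := Nat.cast_le.mpr hi.le
      nlinarith
    have m1 : Integrable (fun p : ℝ × ℝ => p.1) π :=
      (integrable_const (4 * (n : ℝ))).mono' measurable_fst.aestronglyMeasurable
        (by filter_upwards [hb1] with p hp; simpa [Real.norm_eq_abs] using hp)
    have m2 : Integrable (fun p : ℝ × ℝ => p.2) π :=
      (integrable_const (4 * (n : ℝ) + 3)).mono' measurable_snd.aestronglyMeasurable
        (by filter_upwards [hb2] with p hp; simpa [Real.norm_eq_abs] using hp)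
    have mdist : Integrable (fun p : ℝ × ℝ => dist p.1 p.2) π :=
      (integrable_const (8 * (n : ℝ) + 3)).mono'
        (measurable_fst.dist measurable_snd).aestronglyMeasurable
        (by
          filter_upwards [hb1, hb2] with p h1 h2
          rw [Real.norm_eq_abs, Real.dist_eq, abs_abs]
          calc |p.1 - p.2| ≤ |p.1| + |p.2| := abs_sub _ _
            _ ≤ 8 * (n : ℝ) + 3 := by linarith)
    have hmono : ∫ p, (p.2 - p.1) ∂π ≤ ∫ p, dist p.1 p.2 ∂π := by
      refine integral_mono_ae (m2.sub m1) mdist (ae_of_all _ fun p => ?_)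
      show p.2 - p.1 ≤ dist p.1 p.2
      rw [Real.dist_eq, abs_sub_comm]
      exact le_abs_self _
    have e1 : ∫ p, p.1 ∂π = ∫ x, x ∂P := by
      rw [← hπ1]
      exact (integral_map measurable_fst.aemeasurable aestronglyMeasurable_id).symm
    have e2 : ∫ p, p.2 ∂π = ∫ x, x ∂Q := by
      rw [← hπ2]
      exact (integral_map measurable_snd.aemeasurable aestronglyMeasurable_id).symm
    have hsub : ∫ p, (p.2 - p.1) ∂π = (∫ x, x ∂Q) - ∫ x, x ∂P := by
      rw [integral_sub m2 m1, e1, e2]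
    have hval : (∫ x, x ∂Q) - ∫ x, x ∂P = 3 := by
      rw [hPint (fun x => x), hQint (fun x => x), ← mul_sub, ← Finset.sum_sub_distrib]
      simp only [add_sub_cancel_left, Finset.sum_const, Finset.card_range, nsmul_eq_mul]
      field_simp
    linarith [hmono, hsub ▸ hval]
  have mem3 : (3 : ℝ) ∈ {r : ℝ | ∃ π : Measure (ℝ × ℝ),
      π.map Prod.fst = P ∧ π.map Prod.snd = Q ∧ r = ∫ p, dist p.1 p.2 ∂π} := by
    refine ⟨(n : ℝ≥0∞)⁻¹ • ∑ i ∈ Finset.range n,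
      Measure.dirac ((4 * (i : ℝ), 4 * (i : ℝ) + 3) : ℝ × ℝ), ?_, ?_, ?_⟩
    · rw [hP, Measure.map_smul, map_finset_sum' measurable_fst]
      simp [Measure.map_dirac' measurable_fst]
    · rw [hQ, Measure.map_smul, map_finset_sum' measurable_snd]
      simp [Measure.map_dirac' measurable_snd]
    · rw [integral_smul_sum_dirac n _ (fun p : ℝ × ℝ => dist p.1 p.2)]
      have : ∀ i ∈ Finset.range n,
          dist (4 * (i : ℝ)) (4 * (i : ℝ) + 3) = (3 : ℝ) := by
        intro i _
        rw [Real.dist_eq]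
        norm_num
      rw [Finset.sum_congr rfl this]
      simp only [Finset.sum_const, Finset.card_range, nsmul_eq_mul]
      field_simp
  constructor
  · exact le_antisymm (csInf_le ⟨3, key⟩ mem3) (le_csInf ⟨3, mem3⟩ key)
  · intro f hf hint
    rw [hPint f, hQint f] at hint
    have hle : ∀ i ∈ Finset.range n,
        f (4 * (i : ℝ) + 3) - f (4 * (i : ℝ)) ≤ 3 := by
      intro i _
      have h := hf.dist_le_mul (4 * (i : ℝ) + 3) (4 * (i : ℝ))
      rw [Real.dist_eq, Real.dist_eq] at h
      have h3 : |f (4 * (i : ℝ) + 3) - f (4 * (i : ℝ))| ≤ 3 := by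
        simpa using h
      linarith [le_abs_self (f (4 * (i : ℝ) + 3) - f (4 * (i : ℝ)))]
    have hsum : ∑ i ∈ Finset.range n, (f (4 * (i : ℝ) + 3) - f (4 * (i : ℝ)))
        = ∑ i ∈ Finset.range n, (3 : ℝ) := by
      rw [Finset.sum_sub_distrib]
      have h' : (∑ i ∈ Finset.range n, f (4 * (i : ℝ)))
          - ∑ i ∈ Finset.range n, f (4 * (i : ℝ) + 3) = -3 * n := by
        have := hint
        field_simp [← mul_sub] at this
        linarith
      simp only [Finset.sum_const, Finset.card_range, nsmul_eq_mul]
      linarith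
    have heach := (Finset.sum_eq_sum_iff_of_le hle).mp hsum
    have key1 : ∀ i < n, f (4 * (i : ℝ) + 3) = f (4 * (i : ℝ)) + 3 := by
      intro i hi
      have := heach i (Finset.mem_range.mpr hi)
      linarith
    have step : ∀ i, i + 1 < n → f (4 * (i : ℝ)) + 2 ≤ f (4 * (i : ℝ) + 4) := by
      intro i h
      have e := key1 i (by omega)
      have hd := hf.dist_le_mul (4 * (i : ℝ) + 4) (4 * (i : ℝ) + 3)
      rw [Real.dist_eq, Real.dist_eq] at hd
      norm_num at hd
      have := neg_abs_le (f (4 * (i : ℝ) + 4) - f (4 * (i : ℝ) + 3))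
      linarith
    have monoP : ∀ j, j < n → ∀ i, i < j → f (4 * (i : ℝ)) < f (4 * (j : ℝ)) := by
      intro j
      induction j with
      | zero => omega
      | succ k ih =>
        intro hj i hi
        have hc : (4 : ℝ) * ((k + 1 : ℕ) : ℝ) = 4 * (k : ℝ) + 4 := by push_cast; ring
        have hstep := step k hj
        rw [hc]
        rcases Nat.lt_succ_iff_lt_or_eq.mp hi with h | h
        · have := ih (by omega) i h
          linarith
        · subst h
          linarith
    refine ⟨key1, fun i _ j hj hij => monoP j hj i hij, fun i hi j hj hij => ?_⟩
    rw [key1 i hi, key1 j hj]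
    linarith [monoP j hj i hij]
end
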